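/- arXiv:alg-geom/9509009 — 2 statements merged into one kernel-verified Lean document; each statement's English description precedes it below -/
import Mathlib

section
/- For an Eulerian poset P of rank d ≥ 1, the polynomial H(P,t) satisfies the symmetry H(P,t) = t^{d−1} H(P, t^{−1}). -/
open Finset Polynomial
open scoped Classical

/-- The defining recursion of the Möbius function of a finite poset. -/
def MobiusRec {P : Type*} [PartialOrder P] [Fintype P] (mu : P → P → ℤ) : Prop :=
  (∀ x : P, mu x x = 1) ∧
    ∀ x y : P, x < y → (∑ z : P, if x ≤ z ∧ z ≤ y then mu x z else 0) = 0

/-- A finite poset with rank function `ρ` is Eulerian if its Möbius function satisfies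
`μ(x,y) = (-1)^(ρ(y) - ρ(x))` for all `x ≤ y`. -/
def IsEulerian {P : Type*} [PartialOrder P] [Fintype P] (ρ : P → ℕ) : Prop :=
  ∀ mu : P → P → ℤ, MobiusRec mu → ∀ x y : P, x ≤ y → mu x y = (-1 : ℤ) ^ (ρ y - ρ x)

/-- `ρ` is a rank function of rank `d`: `ρ(⊥) = 0`, `ρ(⊤) = d`, `ρ` is monotone and
increases by one along covering relations. -/
def IsRankFunction {P : Type*} [PartialOrder P] [BoundedOrder P] (ρ : P → ℕ) (d : ℕ) : Prop :=
  ρ ⊥ = 0 ∧ ρ ⊤ = d ∧ Monotone ρ ∧ ∀ x y : P, x ⋖ y → ρ y = ρ x + 1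

/-- The truncation operator `τ_{< d/2}`, keeping only the terms of degree `< d/2`
(that is, `2*i < d`). -/
noncomputable def truncLtHalf (d : ℕ) (p : Polynomial ℤ) : Polynomial ℤ :=
  ∑ i ∈ Finset.range (p.natDegree + 1),
    if 2 * i < d then Polynomial.C (p.coeff i) * Polynomial.X ^ i else 0

/-- Stanley's polynomials `G([x,y],t)` and `H([x,y],t)` of the intervals of a finite graded
poset `P` with rank function `ρ`, given by the recursion: `G = H = 1` on rank-0 intervals,
`H([x,y],t) = ∑_{x < z ≤ y} (t-1)^(ρ(z)-ρ(x)-1) G([z,y],t)`, and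
`G([x,y],t) = τ_{< (ρ(y)-ρ(x))/2} ((1-t) H([x,y],t))`. -/
def GHSystem {P : Type*} [PartialOrder P] [Fintype P] (ρ : P → ℕ)
    (G H : P → P → Polynomial ℤ) : Prop :=
  (∀ x : P, G x x = 1 ∧ H x x = 1) ∧
  (∀ x y : P, x < y →
      H x y = ∑ z : P,
        if x < z ∧ z ≤ y then (Polynomial.X - 1) ^ (ρ z - ρ x - 1) * G z y else 0) ∧
  (∀ x y : P, x < y → G x y = truncLtHalf (ρ y - ρ x) ((1 - Polynomial.X) * H x y))

/-!
Induct on intervals `[x, y]` from the top. By induction `(1 - t) H([x,y])` is antisymmetric under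
reflection at degree `n = ρ y - ρ x`, so its middle coefficient vanishes and reflecting its lower
half `G([x,y])` gives `G - (1 - t) H`. Substituting this into the reflected defining sum of
`H([x,y])` gives `∑_{x<z≤y} (1-t)^(ρz-ρx-1) G([z,y]) - ∑_{x<z<y} (1-t)^(ρz-ρx) H([z,y])`.
Expanding each `H([z,y])` and exchanging the sums, the Eulerian relation
`∑_{x<z<w} (-1)^(ρz-ρx) = -1 - (-1)^(ρw-ρx)` turns the second sum into the first minus `H([x,y])`.
-/

namespace Polynomial

lemma coeff_truncLtHalf (n : ℕ) (p : ℤ[X]) (k : ℕ) :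
    (truncLtHalf n p).coeff k = if 2 * k < n then p.coeff k else 0 := by
  rw [truncLtHalf, ← sum_filter, finsetSum_coeff]
  simp only [coeff_C_mul_X_pow, sum_ite_eq, mem_filter, mem_range]
  split_ifs <;> grind [coeff_eq_zero_of_natDegree_lt]

lemma natDegree_truncLtHalf_le (n : ℕ) (p : ℤ[X]) : (truncLtHalf n p).natDegree ≤ n := by
  refine natDegree_le_iff_coeff_eq_zero.2 fun k hk => ?_
  rw [coeff_truncLtHalf, if_neg (by omega)]

lemma reflect_truncLtHalf {n : ℕ} {f : ℤ[X]} (hf : f.reflect n = -f) :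
    (truncLtHalf n f).reflect n = truncLtHalf n f - f := by
  ext i
  have hi := congrArg (coeff · i) hf
  simp only [coeff_reflect, coeff_neg] at hi
  rw [coeff_reflect, coeff_sub, coeff_truncLtHalf, coeff_truncLtHalf]
  rcases le_or_gt i n with hin | hni
  · rw [revAt_le hin] at hi ⊢
    rcases lt_trichotomy (2 * i) n with h | h | h
    · rw [if_neg (by omega), if_pos h]; ring
    · rw [if_neg (by omega), if_neg (by omega)]
      rw [show n - i = i by omega] at hi
      omega
    · rw [if_pos (by omega), if_neg (by omega), hi]; ring
  · rw [revAt_eq_self_of_lt hni] at hi ⊢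
    rw [if_neg (by omega)]
    omega

lemma reflect_sum {R ι : Type*} [Semiring R] (N : ℕ) (s : Finset ι) (f : ι → R[X]) :
    (∑ i ∈ s, f i).reflect N = ∑ i ∈ s, (f i).reflect N := by
  ext; simp [coeff_reflect]

variable {R : Type*} [CommRing R]

lemma natDegree_X_sub_one_pow_le (k : ℕ) : ((X - 1 : R[X]) ^ k).natDegree ≤ k := by
  simpa using natDegree_pow_le_of_le k (natDegree_X_sub_C_le (1 : R))

lemma reflect_X_sub_one_pow (k : ℕ) : ((X - 1 : R[X]) ^ k).reflect k = (1 - X) ^ k := by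
  induction k with
  | zero => simp
  | succ k ih =>
    rw [pow_succ, pow_succ, reflect_mul _ _ (natDegree_X_sub_one_pow_le k)
      (by simpa using natDegree_X_sub_C_le (1 : R)), ih, reflect_sub, reflect_one_X, reflect_one]
    ring

lemma reflect_one_sub_X_mul {p : R[X]} {m : ℕ} (hp : p.natDegree ≤ m) :
    ((1 - X) * p).reflect (1 + m) = (X - 1) * p.reflect m := by
  rw [reflect_mul _ _ ((natDegree_sub_le _ _).trans (by simp [natDegree_X_le])) hp,
    reflect_sub, reflect_one_X, reflect_one, pow_one]

lemma reflect_truncLtHalf_one_sub_X_mul {p : ℤ[X]} {m : ℕ} (hp : p.natDegree ≤ m)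
    (hsym : p.reflect m = p) :
    (truncLtHalf (1 + m) ((1 - X) * p)).reflect (1 + m) =
      truncLtHalf (1 + m) ((1 - X) * p) - (1 - X) * p := by
  refine reflect_truncLtHalf ?_
  rw [reflect_one_sub_X_mul hp, hsym]
  ring

end Polynomial

attribute [local instance] Fintype.toLocallyFiniteOrder

section Eulerian

variable {P : Type*} [PartialOrder P] [Fintype P]

lemma mobiusRec_mu : MobiusRec (P := P) ⇑(IncidenceAlgebra.mu ℤ) := by
  refine ⟨IncidenceAlgebra.mu_self, fun x y hxy => ?_⟩
  rw [← sum_filter, filter_le_le_eq_Icc, IncidenceAlgebra.sum_Icc_mu_right, if_neg hxy.ne]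

namespace IsEulerian

variable {ρ : P → ℕ}

lemma sum_Icc_neg_one_pow (hE : IsEulerian ρ) {x y : P} (h : x < y) :
    ∑ z ∈ Icc x y, (-1 : ℤ) ^ (ρ z - ρ x) = 0 := by
  calc ∑ z ∈ Icc x y, (-1 : ℤ) ^ (ρ z - ρ x)
      = ∑ z ∈ Icc x y, IncidenceAlgebra.mu ℤ x z :=
        sum_congr rfl fun z hz => (hE _ mobiusRec_mu x z (mem_Icc.1 hz).1).symm
    _ = 0 := by rw [IncidenceAlgebra.sum_Icc_mu_right, if_neg h.ne]

lemma sum_Ioo_neg_one_pow {R : Type*} [Ring R] (hE : IsEulerian ρ) {x y : P} (h : x < y) :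
    ∑ z ∈ Ioo x y, (-1 : R) ^ (ρ z - ρ x) = -1 - (-1) ^ (ρ y - ρ x) := by
  have := hE.sum_Icc_neg_one_pow h
  rw [Icc_eq_cons_Ioc h.le, sum_cons, Ioc_eq_cons_Ioo h, sum_cons, Nat.sub_self,
    pow_zero] at this
  have hℤ : ∑ z ∈ Ioo x y, (-1 : ℤ) ^ (ρ z - ρ x) = -1 - (-1) ^ (ρ y - ρ x) := by linarith
  simpa using congrArg (Int.cast : ℤ → R) hℤ

lemma sum_Ioo_neg_pow_mul_pow {R : Type*} [CommRing R] (hE : IsEulerian ρ)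
    (hρ : StrictMono ρ) (a : R) {x y : P} (h : x < y) :
    ∑ z ∈ Ioo x y, (-a) ^ (ρ z - ρ x) * a ^ (ρ y - ρ z - 1) =
      (-a) ^ (ρ y - ρ x - 1) - a ^ (ρ y - ρ x - 1) := by
  have hterm : ∀ z ∈ Ioo x y, (-a) ^ (ρ z - ρ x) * a ^ (ρ y - ρ z - 1) =
      (-1) ^ (ρ z - ρ x) * a ^ (ρ y - ρ x - 1) := by
    intro z hz
    have hxz := hρ (mem_Ioo.1 hz).1
    have hzy := hρ (mem_Ioo.1 hz).2
    rw [neg_pow, mul_assoc, ← pow_add]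
    congr 2
    omega
  have hxy := hρ h
  obtain ⟨k, hk⟩ : ∃ k, ρ y - ρ x = k + 1 := ⟨ρ y - ρ x - 1, by omega⟩
  rw [sum_congr rfl hterm, ← sum_mul, hE.sum_Ioo_neg_one_pow h, hk, Nat.add_sub_cancel, neg_pow]
  ring

end IsEulerian

end Eulerian

namespace GHSystem

variable {P : Type*} [PartialOrder P] [Fintype P] {ρ : P → ℕ} {G H : P → P → ℤ[X]}

lemma H_eq_sum_Ioc (hGH : GHSystem ρ G H) {x y : P} (h : x < y) :
    H x y = ∑ z ∈ Ioc x y, (X - 1) ^ (ρ z - ρ x - 1) * G z y := by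
  rw [hGH.2.1 x y h, ← sum_filter, filter_lt_le_eq_Ioc]

lemma natDegree_G_le (hGH : GHSystem ρ G H) {x y : P} (h : x ≤ y) :
    (G x y).natDegree ≤ ρ y - ρ x := by
  rcases h.eq_or_lt with rfl | h
  · simp [(hGH.1 x).1]
  · rw [hGH.2.2 x y h]
    exact natDegree_truncLtHalf_le _ _

lemma natDegree_H_le (hGH : GHSystem ρ G H) (hρ : StrictMono ρ) {x y : P} (h : x < y) :
    (H x y).natDegree ≤ ρ y - ρ x - 1 := by
  rw [hGH.H_eq_sum_Ioc h]
  refine natDegree_sum_le_of_forall_le _ _ fun z hz => natDegree_mul_le.trans ?_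
  have hxz := hρ (mem_Ioc.1 hz).1
  have hzy := hρ.monotone (mem_Ioc.1 hz).2
  have := hGH.natDegree_G_le (mem_Ioc.1 hz).2
  have := natDegree_X_sub_one_pow_le (R := ℤ) (ρ z - ρ x - 1)
  omega

lemma reflect_G (hGH : GHSystem ρ G H) (hρ : StrictMono ρ) {x y : P} (h : x < y)
    (hsym : (H x y).reflect (ρ y - ρ x - 1) = H x y) :
    (G x y).reflect (ρ y - ρ x) = G x y - (1 - X) * H x y := by
  have hdeg := hGH.natDegree_H_le hρ h
  obtain ⟨m, hm⟩ : ∃ m, ρ y - ρ x = 1 + m := ⟨ρ y - ρ x - 1, by have := hρ h; omega⟩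
  rw [hm, Nat.add_sub_cancel_left] at hsym hdeg
  rw [hGH.2.2 x y h, hm]
  exact reflect_truncLtHalf_one_sub_X_mul hdeg hsym

lemma reflect_H (hGH : GHSystem ρ G H) (hρ : StrictMono ρ) {x y : P} (h : x < y)
    (hG : ∀ z ∈ Ioo x y, (G z y).reflect (ρ y - ρ z) = G z y - (1 - X) * H z y) :
    (H x y).reflect (ρ y - ρ x - 1) =
      ∑ z ∈ Ioc x y, (1 - X) ^ (ρ z - ρ x - 1) * G z y -
        ∑ z ∈ Ioo x y, (1 - X) ^ (ρ z - ρ x) * H z y := by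
  have hterm : ∀ z ∈ Ioc x y, ((X - 1) ^ (ρ z - ρ x - 1) * G z y).reflect (ρ y - ρ x - 1) =
      (1 - X) ^ (ρ z - ρ x - 1) * (G z y).reflect (ρ y - ρ z) := by
    intro z hz
    have hxz := hρ (mem_Ioc.1 hz).1
    have hzy := hρ.monotone (mem_Ioc.1 hz).2
    rw [show ρ y - ρ x - 1 = (ρ z - ρ x - 1) + (ρ y - ρ z) by omega,
      reflect_mul _ _ (natDegree_X_sub_one_pow_le _) (hGH.natDegree_G_le (mem_Ioc.1 hz).2),
      reflect_X_sub_one_pow]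
  have hsplit : ∀ z ∈ Ioo x y, (1 - X) ^ (ρ z - ρ x - 1) * (G z y).reflect (ρ y - ρ z) =
      (1 - X) ^ (ρ z - ρ x - 1) * G z y - (1 - X) ^ (ρ z - ρ x) * H z y := by
    intro z hz
    obtain ⟨k, hk⟩ : ∃ k, ρ z - ρ x = k + 1 :=
      ⟨ρ z - ρ x - 1, by have := hρ (mem_Ioo.1 hz).1; omega⟩
    rw [hG z hz, hk, Nat.add_sub_cancel, pow_succ]
    ring
  rw [hGH.H_eq_sum_Ioc h, reflect_sum, sum_congr rfl hterm, Ioc_eq_cons_Ioo h, sum_cons,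
    sum_cons, sum_congr rfl hsplit, sum_sub_distrib, (hGH.1 y).1]
  simp only [Nat.sub_self, reflect_one, pow_zero]
  ring

lemma sum_Ioo_one_sub_X_pow_mul_H (hGH : GHSystem ρ G H) (hE : IsEulerian ρ)
    (hρ : StrictMono ρ) {x y : P} (h : x < y) :
    ∑ z ∈ Ioo x y, (1 - X) ^ (ρ z - ρ x) * H z y =
      ∑ z ∈ Ioc x y, (1 - X) ^ (ρ z - ρ x - 1) * G z y - H x y := by
  calc ∑ z ∈ Ioo x y, (1 - X) ^ (ρ z - ρ x) * H z y
      = ∑ z ∈ Ioo x y, ∑ w ∈ Ioc z y,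
          (1 - X) ^ (ρ z - ρ x) * (X - 1) ^ (ρ w - ρ z - 1) * G w y := by
        refine sum_congr rfl fun z hz => ?_
        rw [hGH.H_eq_sum_Ioc (mem_Ioo.1 hz).2, mul_sum]
        simp only [mul_assoc]
    _ = ∑ w ∈ Ioc x y, ∑ z ∈ Ioo x w,
          (1 - X) ^ (ρ z - ρ x) * (X - 1) ^ (ρ w - ρ z - 1) * G w y := by
        refine sum_comm' fun z w => ?_
        simp only [mem_Ioo, mem_Ioc]
        constructor
        · rintro ⟨⟨hxz, -⟩, hzw, hwy⟩
          exact ⟨⟨hxz, hzw⟩, hxz.trans hzw, hwy⟩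
        · rintro ⟨⟨hxz, hzw⟩, -, hwy⟩
          exact ⟨⟨hxz, hzw.trans_le hwy⟩, hzw, hwy⟩
    _ = ∑ w ∈ Ioc x y, ((1 - X) ^ (ρ w - ρ x - 1) - (X - 1) ^ (ρ w - ρ x - 1)) * G w y := by
        refine sum_congr rfl fun w hw => ?_
        rw [← sum_mul, ← neg_sub X 1, hE.sum_Ioo_neg_pow_mul_pow hρ _ (mem_Ioc.1 hw).1]
    _ = ∑ z ∈ Ioc x y, (1 - X) ^ (ρ z - ρ x - 1) * G z y - H x y := by
        rw [hGH.H_eq_sum_Ioc h, ← sum_sub_distrib]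
        simp only [sub_mul]

theorem reflect_H_eq_self (hGH : GHSystem ρ G H) (hE : IsEulerian ρ) (hρ : StrictMono ρ)
    {x y : P} (h : x ≤ y) : (H x y).reflect (ρ y - ρ x - 1) = H x y := by
  induction x using WellFoundedGT.induction with
  | _ x ih =>
    rcases h.eq_or_lt with rfl | hxy
    · -- the degree `0 - 1` truncates to `0`, at which the constant `H x x = 1` is symmetric
      simp [(hGH.1 x).2]
    · have hG (z : P) (hz : z ∈ Ioo x y) :
          (G z y).reflect (ρ y - ρ z) = G z y - (1 - X) * H z y :=
        hGH.reflect_G hρ (mem_Ioo.1 hz).2 (ih z (mem_Ioo.1 hz).1 (mem_Ioo.1 hz).2.le)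
      rw [hGH.reflect_H hρ hxy hG, hGH.sum_Ioo_one_sub_X_pow_mul_H hE hρ hxy, sub_sub_cancel]

end GHSystem

theorem H_symmetry_general {P : Type*} [PartialOrder P] [BoundedOrder P] [Fintype P]
    (ρ : P → ℕ) (d : ℕ) (hrk : IsRankFunction ρ d) (hE : IsEulerian ρ)
    (G H : P → P → Polynomial ℤ) (hGH : GHSystem ρ G H) :
    H ⊥ ⊤ = (H ⊥ ⊤).reflect (d - 1) := by
  obtain ⟨hbot, htop, -, hcov⟩ := hrk
  have hρ : StrictMono ρ :=
    (strictMono_iff_forall_covBy ρ).2 fun x y hxy => (hcov x y hxy).symm ▸ Nat.lt_succ_self _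
  simpa [hbot, htop] using (hGH.reflect_H_eq_self hE hρ (bot_le (a := ⊤))).symm

/-- For an Eulerian poset `P` of rank `d ≥ 1`, Stanley's polynomial `H(P,t)` satisfies the
symmetry `H(P,t) = t^(d-1) H(P,t⁻¹)`, i.e. `H(P,t)` equals its own reflection at degree
`d-1`. -/
theorem H_symmetry {P : Type*} [PartialOrder P] [BoundedOrder P] [Fintype P]
    (ρ : P → ℕ) (d : ℕ) (hrk : IsRankFunction ρ d) (hE : IsEulerian ρ)
    (G H : P → P → Polynomial ℤ) (hGH : GHSystem ρ G H) (hd : 1 ≤ d) :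
    H ⊥ ⊤ = (H ⊥ ⊤).reflect (d - 1) :=
  H_symmetry_general ρ d hrk hE G H hGH
end

section
/- For an Eulerian poset P of rank d > 0, the degree of B(P;u,v) with respect to the variable v is strictly less than d/2. -/
open Finset Polynomial
open scoped Classical

/-- The field of rational functions in the two variables `u`, `v` over `ℤ`. -/
noncomputable abbrev KK : Type := FractionRing (MvPolynomial (Fin 2) ℤ)

/-- The variable `u` in `KK`. -/
noncomputable def UU : KK := algebraMap (MvPolynomial (Fin 2) ℤ) KK (MvPolynomial.X 0)

/-- The variable `v` in `KK`. -/
noncomputable def VV : KK := algebraMap (MvPolynomial (Fin 2) ℤ) KK (MvPolynomial.X 1)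

/-- Evaluation of a two-variable polynomial `b(u,v)` at a pair of elements of `KK`. -/
noncomputable def evB (b : MvPolynomial (Fin 2) ℤ) (u v : KK) : KK :=
  MvPolynomial.aeval ![u, v] b

/-- Evaluation of a one-variable polynomial at an element of `KK`. -/
noncomputable def evP (p : Polynomial ℤ) (t : KK) : KK := Polynomial.aeval t p

/-- The defining recursion of the polynomials `B([x,y];u,v)` of the intervals of a finite
graded poset `P`: `B = 1` on rank-0 intervals and
`∑_{x ≤ z ≤ y} B([x,z];u,v) u^(ρ(y)-ρ(z)) G([z,y],u⁻¹v) = G([x,y],uv)`. -/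
def BSystem {P : Type*} [PartialOrder P] [Fintype P] (ρ : P → ℕ)
    (G : P → P → Polynomial ℤ) (B : P → P → MvPolynomial (Fin 2) ℤ) : Prop :=
  (∀ x : P, B x x = 1) ∧
  ∀ x y : P, x < y →
    (∑ z : P, if x ≤ z ∧ z ≤ y then
        evB (B x z) UU VV * UU ^ (ρ y - ρ z) * evP (G z y) (UU⁻¹ * VV) else 0)
      = evP (G x y) (UU * VV)


section Aux

/-- Images in `KK` of polynomials whose `v`-degree is at most `n`. -/
noncomputable def Tset (n : ℕ) : Submodule ℤ KK where
  carrier := {f | ∃ q : MvPolynomial (Fin 2) ℤ,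
    (∀ m ∈ q.support, 2 * m 1 ≤ n) ∧ algebraMap (MvPolynomial (Fin 2) ℤ) KK q = f}
  add_mem' := by
    rintro a b ⟨q, hq, rfl⟩ ⟨q', hq', rfl⟩
    refine ⟨q + q', fun m hm => ?_, (map_add _ _ _)⟩
    rcases Finset.mem_union.1 (MvPolynomial.support_add hm) with h | h
    · exact hq m h
    · exact hq' m h
  zero_mem' := ⟨0, by simp, map_zero _⟩
  smul_mem' := by
    rintro z a ⟨q, hq, rfl⟩
    exact ⟨z • q, fun m hm => hq m (MvPolynomial.support_smul hm), map_zsmul _ _ _⟩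

lemma Tset_mono {m n : ℕ} (h : m ≤ n) : Tset m ≤ Tset n := by
  rintro f ⟨q, hq, rfl⟩
  exact ⟨q, fun m' hm' => le_trans (hq m' hm') h, rfl⟩

lemma mul_mem_Tset {f g : KK} {m n : ℕ} (hf : f ∈ Tset m) (hg : g ∈ Tset n) :
    f * g ∈ Tset (m + n) := by
  obtain ⟨q, hq, rfl⟩ := hf
  obtain ⟨q', hq', rfl⟩ := hg
  refine ⟨q * q', fun s hs => ?_, (map_mul _ _ _)⟩
  obtain ⟨a, ha, b, hb, rfl⟩ := Finset.mem_add.1 (MvPolynomial.support_mul _ _ hs)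
  have := hq a ha; have := hq' b hb
  simp only [Finsupp.add_apply]; omega

lemma gen_mem_Tset {c b n : ℕ} (hb : 2 * b ≤ n) : UU ^ c * VV ^ b ∈ Tset n := by
  refine ⟨MvPolynomial.X 0 ^ c * MvPolynomial.X 1 ^ b, fun m hm => ?_, by
    simp [UU, VV, map_mul, map_pow]⟩
  have : (MvPolynomial.X 0 ^ c * MvPolynomial.X 1 ^ b : MvPolynomial (Fin 2) ℤ)
      = MvPolynomial.monomial (Finsupp.single 0 c + Finsupp.single 1 b) 1 := by
    rw [MvPolynomial.X_pow_eq_monomial, MvPolynomial.X_pow_eq_monomial,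
      MvPolynomial.monomial_mul, one_mul]
  rw [this, MvPolynomial.support_monomial] at hm
  simp only [one_ne_zero, if_false, Finset.mem_singleton] at hm
  subst hm
  simp only [Finsupp.add_apply, Finsupp.single_apply]
  norm_num
  omega

set_option maxHeartbeats 1000000 in
set_option synthInstance.maxHeartbeats 200000 in
lemma UU_ne_zero : UU ≠ 0 := by
  simp only [UU, ne_eq, map_eq_zero_iff _ (IsFractionRing.injective (MvPolynomial (Fin 2) ℤ) KK)]
  exact MvPolynomial.X_ne_zero 0

lemma algC_mul_mem {c : ℤ} {f : KK} {n : ℕ} (hf : f ∈ Tset n) :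
    algebraMap (MvPolynomial (Fin 2) ℤ) KK (MvPolynomial.C c) * f ∈ Tset n := by
  obtain ⟨q, hq, rfl⟩ := hf
  refine ⟨MvPolynomial.C c * q, fun m hm => ?_, by rw [map_mul]⟩
  rw [← MvPolynomial.smul_eq_C_mul] at hm
  exact hq m (MvPolynomial.support_smul hm)

set_option maxHeartbeats 1000000 in
set_option synthInstance.maxHeartbeats 200000 in
lemma evP_uv_mem {p : Polynomial ℤ} {n : ℕ} (hp : ∀ i, p.coeff i ≠ 0 → 2 * i ≤ n) :
    evP p (UU * VV) ∈ Tset n := by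
  rw [evP, Polynomial.aeval_eq_sum_range]
  refine Submodule.sum_mem _ fun i _ => ?_
  by_cases h : p.coeff i = 0
  · simp [h]
  · rw [Algebra.smul_def, IsScalarTower.algebraMap_apply ℤ (MvPolynomial (Fin 2) ℤ) KK,
      MvPolynomial.algebraMap_eq]
    exact algC_mul_mem (by rw [mul_pow]; exact gen_mem_Tset (hp i h))

set_option maxHeartbeats 1000000 in
set_option synthInstance.maxHeartbeats 200000 in
lemma upow_evP_inv_mem {p : Polynomial ℤ} {k : ℕ}
    (hp : ∀ i, p.coeff i ≠ 0 → 2 * i < k) :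
    UU ^ k * evP p (UU⁻¹ * VV) ∈ Tset (k - 1) := by
  rw [evP, Polynomial.aeval_eq_sum_range, Finset.mul_sum]
  refine Submodule.sum_mem _ fun i _ => ?_
  by_cases h : p.coeff i = 0
  · simp [h]
  · have hik : i ≤ k := by have := hp i h; omega
    rw [Algebra.smul_def, IsScalarTower.algebraMap_apply ℤ (MvPolynomial (Fin 2) ℤ) KK,
      MvPolynomial.algebraMap_eq, mul_left_comm]
    refine algC_mul_mem ?_
    have : UU ^ k * (UU⁻¹ * VV) ^ i = UU ^ (k - i) * VV ^ i := by
      rw [mul_pow, inv_pow, ← pow_sub_mul_pow UU hik, mul_assoc,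
        ← mul_assoc (UU ^ i), mul_inv_cancel₀ (pow_ne_zero _ UU_ne_zero), one_mul]
    rw [this]
    exact gen_mem_Tset (by have := hp i h; omega)

set_option maxHeartbeats 1000000 in
set_option synthInstance.maxHeartbeats 200000 in
lemma evB_eq_algebraMap (b : MvPolynomial (Fin 2) ℤ) :
    evB b UU VV = algebraMap (MvPolynomial (Fin 2) ℤ) KK b := by
  have h2 := MvPolynomial.aeval_unique
    (IsScalarTower.toAlgHom ℤ (MvPolynomial (Fin 2) ℤ) KK)
  have h3 : (![UU, VV] : Fin 2 → KK) =
      ⇑(IsScalarTower.toAlgHom ℤ (MvPolynomial (Fin 2) ℤ) KK) ∘ MvPolynomial.X := by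
    funext i; fin_cases i <;> rfl
  rw [evB, h3, ← h2]
  rfl

lemma truncLtHalf_coeff_eq_zero {d : ℕ} {p : Polynomial ℤ} {i : ℕ} (h : ¬ 2 * i < d) :
    (truncLtHalf d p).coeff i = 0 := by
  rw [truncLtHalf, Polynomial.finset_sum_coeff]
  refine Finset.sum_eq_zero fun j _ => ?_
  split_ifs with h2
  · rw [Polynomial.coeff_C_mul, Polynomial.coeff_X_pow]
    rcases eq_or_ne i j with rfl | hne
    · exact absurd h2 h
    · simp [hne]
  · simp

lemma rank_lt_of_lt {P : Type*} [PartialOrder P] [Fintype P] {ρ : P → ℕ}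
    (hmono : Monotone ρ) (hcov : ∀ x y : P, x ⋖ y → ρ y = ρ x + 1)
    {x y : P} (h : x < y) : ρ x < ρ y := by
  obtain ⟨c, hc, hcy⟩ := h.exists_covby_le
  have h1 := hcov x c hc
  have h2 := hmono hcy
  omega

set_option maxHeartbeats 2000000 in
set_option synthInstance.maxHeartbeats 200000 in
lemma key_induction {P : Type*} [PartialOrder P] [Fintype P]
    (ρ : P → ℕ) (hmono : Monotone ρ) (hcov : ∀ x y : P, x ⋖ y → ρ y = ρ x + 1)
    (G H : P → P → Polynomial ℤ) (hGH : GHSystem ρ G H)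
    (B : P → P → MvPolynomial (Fin 2) ℤ) (hB : BSystem ρ G B) :
    ∀ n : ℕ, ∀ x y : P, x < y → ρ y - ρ x ≤ n →
      evB (B x y) UU VV ∈ Tset (ρ y - ρ x - 1) := by
  have hGd : ∀ x y : P, x < y → ∀ i, (G x y).coeff i ≠ 0 → 2 * i < ρ y - ρ x := by
    intro x y hxy i hi
    by_contra h
    rw [hGH.2.2 x y hxy] at hi
    exact hi (truncLtHalf_coeff_eq_zero h)
  intro n
  induction n with
  | zero =>
    intro x y hxy hle
    have := rank_lt_of_lt hmono hcov hxy
    omega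
  | succ n ih =>
    intro x y hxy hle
    have hxy' := rank_lt_of_lt hmono hcov hxy
    have hr := hB.2 x y hxy
    rw [← Finset.add_sum_erase _ _ (Finset.mem_univ y)] at hr
    have hyterm : (if x ≤ y ∧ y ≤ y then
        evB (B x y) UU VV * UU ^ (ρ y - ρ y) * evP (G y y) (UU⁻¹ * VV) else 0)
        = evB (B x y) UU VV := by
      rw [if_pos ⟨le_of_lt hxy, le_refl y⟩, Nat.sub_self, pow_zero, (hGH.1 y).1,
        evP, map_one, mul_one, mul_one]
    rw [hyterm] at hr
    have heq : evB (B x y) UU VV = evP (G x y) (UU * VV)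
        - ∑ z ∈ Finset.univ.erase y, (if x ≤ z ∧ z ≤ y then
            evB (B x z) UU VV * UU ^ (ρ y - ρ z) * evP (G z y) (UU⁻¹ * VV) else 0) := by
      rw [← hr]; ring
    rw [heq]
    refine Submodule.sub_mem _ ?_ (Submodule.sum_mem _ fun z hz => ?_)
    · exact evP_uv_mem fun i hi => by have := hGd x y hxy i hi; omega
    · by_cases hcond : x ≤ z ∧ z ≤ y
      · rw [if_pos hcond]
        have hzy : z ≠ y := (Finset.mem_erase.1 hz).1
        have hzly : z < y := lt_of_le_of_ne hcond.2 hzy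
        have hzy' := rank_lt_of_lt hmono hcov hzly
        rcases eq_or_lt_of_le hcond.1 with hxz | hxz
        · subst hxz
          have hone : evB (B x x) UU VV = 1 := by
            rw [hB.1 x, evB, map_one]
          rw [hone, one_mul]
          exact upow_evP_inv_mem fun i hi => hGd x y hxy i hi
        · have hxz' := rank_lt_of_lt hmono hcov hxz
          have h1 : evB (B x z) UU VV ∈ Tset (ρ z - ρ x - 1) :=
            ih x z hxz (by omega)
          have h2 : UU ^ (ρ y - ρ z) * evP (G z y) (UU⁻¹ * VV) ∈ Tset (ρ y - ρ z - 1) :=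
            upow_evP_inv_mem fun i hi => hGd z y hzly i hi
          have h3 := mul_mem_Tset h1 h2
          rw [← mul_assoc] at h3
          exact Tset_mono (by omega) h3
      · rw [if_neg hcond]; exact Submodule.zero_mem _

end Aux

/-- For an Eulerian poset `P` of rank `d > 0`, the degree of `B(P;u,v)` with respect to the
variable `v` is strictly less than `d/2`. -/
theorem B_v_degree {P : Type*} [PartialOrder P] [BoundedOrder P] [Fintype P]
    (ρ : P → ℕ) (d : ℕ) (hrk : IsRankFunction ρ d) (hE : IsEulerian ρ)
    (G H : P → P → Polynomial ℤ) (hGH : GHSystem ρ G H)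
    (B : P → P → MvPolynomial (Fin 2) ℤ) (hB : BSystem ρ G B) (hd : 0 < d) :
    2 * MvPolynomial.degreeOf 1 (B ⊥ ⊤) < d := by
  obtain ⟨hbot, htop, hmono, hcov⟩ := hrk
  have hlt : (⊥ : P) < ⊤ := by
    rcases eq_or_lt_of_le (bot_le : (⊥ : P) ≤ ⊤) with h | h
    · exfalso
      have : ρ (⊤ : P) = ρ (⊥ : P) := by rw [h]
      omega
    · exact h
  have hkey := key_induction ρ hmono hcov G H hGH B hB (ρ (⊤ : P) - ρ (⊥ : P))
    ⊥ ⊤ hlt le_rfl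
  rw [evB_eq_algebraMap] at hkey
  obtain ⟨q, hq, hmap⟩ := hkey
  have hqB : q = B ⊥ ⊤ := IsFractionRing.injective (MvPolynomial (Fin 2) ℤ) KK hmap
  subst hqB
  have hdeg : MvPolynomial.degreeOf 1 (B ⊥ ⊤) ≤ (ρ (⊤ : P) - ρ (⊥ : P) - 1) / 2 := by
    rw [MvPolynomial.degreeOf_le_iff]
    intro m hm
    have := hq m hm
    omega
  have hb0 : ρ (⊥ : P) = 0 := hbot
  have ht : ρ (⊤ : P) = d := htop
  omega
end
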